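/- arXiv:1611.03248 — 3 statements merged into one kernel-verified Lean document; each statement's English description precedes it below -/
import Mathlib

section
/- Let k be a field of characteristic p ≥ 3. The map t ↦ (t^{p²}, t^{p²+p} + t) from 𝔸¹_k to 𝔸²_k is a closed embedding, i.e., the k-algebra generated by t^{p²} and t^{p²+p} + t inside k[t] equals k[t]. -/
open Polynomial

/-- Over a field of characteristic `p ≥ 3`, the map `t ↦ (t^{p²}, t^{p²+p} + t)` is a closed
embedding of `𝔸¹` into `𝔸²`: the `k`-algebra generated by `t^{p²}` and `t^{p²+p} + t`
inside `k[t]` is all of `k[t]`. -/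
theorem stmt5 (k : Type*) [Field k] (p : ℕ) [Fact p.Prime] [CharP k p] (hp : 3 ≤ p) :
    Algebra.adjoin k
        ({X ^ p ^ 2, X ^ (p ^ 2 + p) + X} : Set (Polynomial k)) = ⊤ := by
  set A := Algebra.adjoin k ({X ^ p ^ 2, X ^ (p ^ 2 + p) + X} : Set (Polynomial k)) with hA
  have hf : (X : Polynomial k) ^ p ^ 2 ∈ A := Algebra.subset_adjoin (by simp)
  have hg : (X : Polynomial k) ^ (p ^ 2 + p) + X ∈ A := Algebra.subset_adjoin (by simp)
  have h1 : ((X : Polynomial k) ^ (p ^ 2 + p) + X) ^ p = X ^ ((p ^ 2 + p) * p) + X ^ p := by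
    rw [add_pow_char, ← pow_mul]
  have h2 : ((X : Polynomial k) ^ p ^ 2) ^ (p + 1) = X ^ ((p ^ 2 + p) * p) := by
    rw [← pow_mul]; congr 1; ring
  have hXp : (X : Polynomial k) ^ p ∈ A := by
    have hx : (X : Polynomial k) ^ p =
        ((X : Polynomial k) ^ (p ^ 2 + p) + X) ^ p - ((X : Polynomial k) ^ p ^ 2) ^ (p + 1) := by
      rw [h1, h2]; ring
    rw [hx]
    exact sub_mem (pow_mem hg p) (pow_mem hf (p + 1))
  have hX : (X : Polynomial k) ∈ A := by
    have hx : (X : Polynomial k) =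
        ((X : Polynomial k) ^ (p ^ 2 + p) + X) - X ^ p * X ^ p ^ 2 := by
      rw [← pow_add, show p + p ^ 2 = p ^ 2 + p from by ring]; ring
    rw [hx]
    exact sub_mem hg (mul_mem hXp hf)
  rw [eq_top_iff, ← Polynomial.adjoin_X]
  exact Algebra.adjoin_le (by simpa using hX)
end

section
/- Let k be a field of characteristic p ≥ 3. The morphism t ↦ (t^{p²}, t^{p²}(t^{p²+p}+t)+1, −t^{p²}(t^{p²+p}+t)² − 2(t^{p²+p}+t)) from 𝔸¹_k to the affine surface S̃₀ = {xz + y² = 1} ⊂ 𝔸³_k is a closed embedding. -/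
open Polynomial

/-- Cancellation trick: if a subalgebra `A` of `k[t]` contains `g`, `w*(g+2)` and `w*g^n`
with `(-2)^n = 1` in `k`, then it contains `w`. -/
lemma key_cancel {k : Type*} [Field k] (A : Subalgebra k (Polynomial k))
    (w g : Polynomial k) (n : ℕ) (hn : ((-2 : k)) ^ n = 1)
    (hg : g ∈ A) (h1 : w * (g + 2) ∈ A) (h2 : w * g ^ n ∈ A) : w ∈ A := by
  have hdvd : (X - C (-2 : k)) ∣ X ^ n - 1 := by
    rw [dvd_iff_isRoot]
    simp [IsRoot, hn]
  obtain ⟨γ, hγ⟩ := hdvd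
  have hgn : g ^ n - 1 = (g + 2) * aeval g γ := by
    have h := congrArg (aeval g) hγ
    simp only [map_sub, map_mul, map_one, map_pow, aeval_X, aeval_C, map_neg,
      map_ofNat] at h
    rw [h]; ring
  have hid : w = w * g ^ n - (aeval g γ) * (w * (g + 2)) := by
    linear_combination (-w) * hgn
  rw [hid]
  have hγA : aeval g γ ∈ A := by
    have h' : aeval g γ ∈ Algebra.adjoin k ({g} : Set (Polynomial k)) :=
      aeval_mem_adjoin_singleton k g
    exact Algebra.adjoin_le (Set.singleton_subset_iff.mpr hg) h'
  exact sub_mem h2 (mul_mem hγA h1)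

/-- The morphism `t ↦ (t^{p²}, t^{p²}(t^{p²+p}+t)+1, −t^{p²}(t^{p²+p}+t)² − 2(t^{p²+p}+t))`
maps `𝔸¹` into the surface `{xz + y² = 1}` and is a closed embedding: the `k`-algebra
generated by the three coordinate polynomials is all of `k[t]`. -/
theorem stmt8 (k : Type*) [Field k] (p : ℕ) [Fact p.Prime] [CharP k p] (hp : 3 ≤ p) :
    let x : Polynomial k := X ^ p ^ 2
    let y : Polynomial k := X ^ p ^ 2 * (X ^ (p ^ 2 + p) + X) + 1
    let z : Polynomial k := -(X ^ p ^ 2 * (X ^ (p ^ 2 + p) + X) ^ 2) - 2 * (X ^ (p ^ 2 + p) + X)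
    x * z + y ^ 2 = 1 ∧ Algebra.adjoin k ({x, y, z} : Set (Polynomial k)) = ⊤ := by
  have hprime : p.Prime := Fact.out
  have hodd : Odd p := hprime.odd_of_ne_two (by omega)
  -- basic char-p facts in k
  have h2k : (2 : k) ^ p = 2 := by
    have h := add_pow_char (1 : k) 1 p
    norm_num at h
    exact h
  have h2ne : (-2 : k) ≠ 0 := by
    have h2 : (2 : k) ≠ 0 := by
      have h : ((2 : ℕ) : k) ≠ 0 := fun hc =>
        (fun hd => by have := Nat.le_of_dvd (by norm_num) hd; omega : ¬ p ∣ 2) ((CharP.cast_eq_zero_iff k p 2).mp hc)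
      simpa using h
    simpa using h2
  have hnegp : ((-2 : k)) ^ p = -2 := by rw [hodd.neg_pow, h2k]
  have hn : ((-2 : k)) ^ (p ^ 2 - 1) = 1 := by
    have hsq : ((-2 : k)) ^ (p ^ 2) = -2 := by
      rw [pow_two, pow_mul, hnegp, hnegp]
    have hpos : 1 ≤ p ^ 2 := Nat.one_le_pow _ _ (by omega)
    have h' : ((-2 : k)) ^ (p ^ 2 - 1) * (-2) = -2 := by
      rw [← pow_succ, Nat.sub_add_cancel hpos, hsq]
    exact mul_right_cancel₀ h2ne (by rw [h', one_mul])
  -- char-p facts in k[X]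
  have h2P : (2 : Polynomial k) ^ p = 2 := by
    have h := add_pow_char (1 : Polynomial k) 1 p
    norm_num at h
    exact h
  have hvp : ((X : Polynomial k) ^ (p ^ 2 + p) + X) ^ p
      = (X ^ (p ^ 2)) ^ (p + 1) + X ^ p := by
    rw [add_pow_char]
    ring
  intro x y z
  constructor
  · show (X : Polynomial k) ^ p ^ 2 *
        (-(X ^ p ^ 2 * (X ^ (p ^ 2 + p) + X) ^ 2) - 2 * (X ^ (p ^ 2 + p) + X)) +
        (X ^ p ^ 2 * (X ^ (p ^ 2 + p) + X) + 1) ^ 2 = 1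
    ring
  · set A : Subalgebra k (Polynomial k) := Algebra.adjoin k ({x, y, z} : Set (Polynomial k))
      with hA
    have hx : x ∈ A := Algebra.subset_adjoin (by simp)
    have hy : y ∈ A := Algebra.subset_adjoin (by simp)
    have hz : z ∈ A := Algebra.subset_adjoin (by simp)
    have hxe : x = (X : Polynomial k) ^ (p ^ 2) := rfl
    have hye : y = (X : Polynomial k) ^ p ^ 2 * (X ^ (p ^ 2 + p) + X) + 1 := rfl
    have hze : z = -((X : Polynomial k) ^ p ^ 2 * (X ^ (p ^ 2 + p) + X) ^ 2)
        - 2 * (X ^ (p ^ 2 + p) + X) := rfl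
    -- Frobenius expansions
    have E1 : y ^ p = ((X : Polynomial k) ^ (p ^ 2)) ^ p *
        ((X ^ (p ^ 2)) ^ (p + 1) + X ^ p) + 1 := by
      rw [hye, add_pow_char, mul_pow, hvp, one_pow]
    have Ez : z ^ p = -(((X : Polynomial k) ^ (p ^ 2)) ^ p *
        ((X ^ (p ^ 2)) ^ (p + 1) + X ^ p) ^ 2)
        - 2 * ((X ^ (p ^ 2)) ^ (p + 1) + X ^ p) := by
      have hzz : z = -((X : Polynomial k) ^ (p ^ 2) * (X ^ (p ^ 2 + p) + X) ^ 2
          + 2 * (X ^ (p ^ 2 + p) + X)) := by rw [hze]; ring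
      have hv2p : (((X : Polynomial k) ^ (p ^ 2 + p) + X) ^ 2) ^ p
          = ((X ^ (p ^ 2)) ^ (p + 1) + X ^ p) ^ 2 := by
        rw [← pow_mul, mul_comm, pow_mul, hvp]
      rw [hzz, hodd.neg_pow, add_pow_char, mul_pow, mul_pow, hv2p, hvp, h2P]
      ring
    -- step 1 : a := X^(p^3+p) ∈ A
    have haA : (X : Polynomial k) ^ (p ^ 3 + p) ∈ A := by
      have hid : (X : Polynomial k) ^ (p ^ 3 + p)
          = (y - 1) ^ p - ((X : Polynomial k) ^ (p ^ 2)) ^ (2 * p + 1) := by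
        have h1 : (y - 1 : Polynomial k)
            = (X : Polynomial k) ^ (p ^ 2) * (X ^ (p ^ 2 + p) + X) := by rw [hye]; ring
        rw [h1, mul_pow, hvp]
        ring
      rw [hid]
      exact sub_mem (pow_mem (sub_mem hy (one_mem A)) p) (by rw [← hxe]; exact pow_mem hx _)
    -- step 2 : c := X^p * (X^(p^3+p) + 2) ∈ A
    have hcA : (X : Polynomial k) ^ p * ((X : Polynomial k) ^ (p ^ 3 + p) + 2) ∈ A := by
      have hid : (X : Polynomial k) ^ p * ((X : Polynomial k) ^ (p ^ 3 + p) + 2)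
          = -(z ^ p) - (y ^ p + 1) * ((X : Polynomial k) ^ (p ^ 2)) ^ (p + 1)
            - (X : Polynomial k) ^ (p ^ 3 + p) * ((X : Polynomial k) ^ (p ^ 2)) ^ (p + 1) := by
        rw [Ez, E1]
        ring
      rw [hid]
      refine sub_mem (sub_mem (neg_mem (pow_mem hz p))
        (mul_mem (add_mem (pow_mem hy p) (one_mem A)) ?_)) (mul_mem haA ?_)
      · rw [← hxe]; exact pow_mem hx _
      · rw [← hxe]; exact pow_mem hx _
    -- step 3 : X^p ∈ A
    have hpow1 : (X : Polynomial k) ^ p * ((X : Polynomial k) ^ (p ^ 3 + p)) ^ (p ^ 2 - 1)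
        ∈ A := by
      have hpos : 1 ≤ p ^ 2 := Nat.one_le_pow _ _ (by omega)
      have he : p + (p ^ 3 + p) * (p ^ 2 - 1) = p ^ 2 * p ^ 3 := by
        zify [hpos]
        ring
      have hid : (X : Polynomial k) ^ p * ((X : Polynomial k) ^ (p ^ 3 + p)) ^ (p ^ 2 - 1)
          = ((X : Polynomial k) ^ (p ^ 2)) ^ (p ^ 3) := by
        rw [← pow_mul, ← pow_mul, ← pow_add, he]
      rw [hid, ← hxe]
      exact pow_mem hx _
    have htp : (X : Polynomial k) ^ p ∈ A :=
      key_cancel A _ _ _ hn haA hcA hpow1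
    -- step 4 : s := X^(p^2+1) ∈ A
    have hsA : (X : Polynomial k) ^ (p ^ 2 + 1) ∈ A := by
      have hid : (X : Polynomial k) ^ (p ^ 2 + 1)
          = (y - 1) - ((X : Polynomial k) ^ p) ^ (2 * p + 1) := by
        rw [hye]; ring
      rw [hid]
      exact sub_mem (sub_mem hy (one_mem A)) (pow_mem htp _)
    -- step 5 : X * (X^(p^2+1) + 2) ∈ A
    have h2A : (2 : Polynomial k) ∈ A := by
      rw [← one_add_one_eq_two]; exact add_mem (one_mem A) (one_mem A)
    have hwA : (X : Polynomial k) * ((X : Polynomial k) ^ (p ^ 2 + 1) + 2) ∈ A := by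
      have hid : (X : Polynomial k) * ((X : Polynomial k) ^ (p ^ 2 + 1) + 2)
          = -z - ((X : Polynomial k) ^ p) ^ (3 * p + 2)
            - 2 * ((X : Polynomial k) ^ (p ^ 2 + 1)) * ((X : Polynomial k) ^ p) ^ (p + 1)
            - 2 * ((X : Polynomial k) ^ p) ^ (p + 1) := by
        rw [hze]; ring
      rw [hid]
      exact sub_mem (sub_mem (sub_mem (neg_mem hz) (pow_mem htp _))
        (mul_mem (mul_mem h2A hsA) (pow_mem htp _))) (mul_mem h2A (pow_mem htp _))
    -- step 6 : X * (X^(p^2+1))^(p^2-1) ∈ A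
    have hpow2 : (X : Polynomial k) * ((X : Polynomial k) ^ (p ^ 2 + 1)) ^ (p ^ 2 - 1)
        ∈ A := by
      have hpos : 1 ≤ p ^ 2 := Nat.one_le_pow _ _ (by omega)
      have he : (p ^ 2 + 1) * (p ^ 2 - 1) + 1 = p ^ 2 * p ^ 2 := by
        zify [hpos]
        ring
      have hid : (X : Polynomial k) * ((X : Polynomial k) ^ (p ^ 2 + 1)) ^ (p ^ 2 - 1)
          = ((X : Polynomial k) ^ (p ^ 2)) ^ (p ^ 2) := by
        rw [← pow_mul, ← pow_mul, mul_comm (X : Polynomial k), ← pow_succ, he]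
      rw [hid, ← hxe]
      exact pow_mem hx _
    -- step 7 : X ∈ A
    have hX : (X : Polynomial k) ∈ A :=
      key_cancel A _ _ _ hn hsA hwA hpow2
    rw [hA, eq_top_iff, ← Polynomial.adjoin_X (R := k)]
    exact Algebra.adjoin_le (Set.singleton_subset_iff.mpr hX)
end

section
/- Let k be a field of characteristic ≠ 2 and q₀ = xz + y². For s ∈ k[u], the map Ψ_s : [x:y:z] ↦ [x : y + s(x²/q₀)x : z − 2ys(x²/q₀) − xs(x²/q₀)²] restricts to a bijection of the set S₀(k) = {[x:y:z] ∈ ℙ²(k) : xz + y² ≠ 0}, with inverse Ψ_{−s}. -/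
/-- The map `Ψ_s` on (vector representatives of) points of `ℙ² \ Q₀`. -/
def psi {k : Type*} [Field k] (s : Polynomial k) (v : Fin 3 → k) : Fin 3 → k :=
  let S := Polynomial.eval (v 0 ^ 2 / (v 0 * v 2 + v 1 ^ 2)) s
  ![v 0, v 1 + S * v 0, v 2 - 2 * v 1 * S - v 0 * S ^ 2]

lemma psi_preserves {k : Type*} [Field k] (s : Polynomial k) (v : Fin 3 → k) :
    (psi s v) 0 * (psi s v) 2 + (psi s v) 1 ^ 2 = v 0 * v 2 + v 1 ^ 2 := by
  simp only [psi]
  simp only [Matrix.cons_val_zero, Matrix.cons_val_one, Matrix.head_cons,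
    Matrix.cons_val_two, Matrix.tail_cons]
  ring

lemma psi_inv {k : Type*} [Field k] (s : Polynomial k) (v : Fin 3 → k) :
    psi (-s) (psi s v) = v := by
  have hq := psi_preserves s v
  have h0 : (psi s v) 0 = v 0 := by simp [psi]
  funext i
  simp only [psi, h0, hq] at *
  set S := Polynomial.eval (v 0 ^ 2 / (v 0 * v 2 + v 1 ^ 2)) s with hS
  fin_cases i <;>
    simp [Polynomial.eval_neg, ← hS, Matrix.cons_val_one, Matrix.head_cons] <;> ring

/-- `Ψ_s` is compatible with scaling (hence well defined on projective points), maps the set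
`S₀(k) = {[x:y:z] : xz + y² ≠ 0}` into itself, and restricts to a bijection of `S₀(k)` with
inverse `Ψ_{−s}`. -/
theorem stmt16 (k : Type*) [Field k] (h2 : (2 : k) ≠ 0) (s : Polynomial k) :
    (∀ (v : Fin 3 → k) (c : k), c ≠ 0 → psi s (c • v) = c • psi s v) ∧
    (∀ v : Fin 3 → k, v 0 * v 2 + v 1 ^ 2 ≠ 0 →
      (psi s v) 0 * (psi s v) 2 + (psi s v) 1 ^ 2 ≠ 0 ∧
      psi (-s) (psi s v) = v ∧ psi s (psi (-s) v) = v) := by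
  refine ⟨?_, ?_⟩
  · intro v c hc
    have harg : (c • v) 0 ^ 2 / ((c • v) 0 * (c • v) 2 + (c • v) 1 ^ 2)
        = v 0 ^ 2 / (v 0 * v 2 + v 1 ^ 2) := by
      have h1 : (c • v) 0 * (c • v) 2 + (c • v) 1 ^ 2 = c ^ 2 * (v 0 * v 2 + v 1 ^ 2) := by
        simp [Pi.smul_apply, smul_eq_mul]; ring
      have h2' : (c • v) 0 ^ 2 = c ^ 2 * v 0 ^ 2 := by
        simp [Pi.smul_apply, smul_eq_mul, mul_pow]
      rw [h1, h2', mul_div_mul_left _ _ (pow_ne_zero 2 hc)]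
    funext i
    simp only [psi, harg]
    fin_cases i <;> simp [Pi.smul_apply, smul_eq_mul] <;> ring
  · intro v hq
    refine ⟨by rw [psi_preserves]; exact hq, psi_inv s v, ?_⟩
    have := psi_inv (-s) v
    rwa [neg_neg] at this
end
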